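/- arXiv:2403.19388 — 2 statements merged into one kernel-verified Lean document; each statement's English description precedes it below -/
import Mathlib

section
/- Let R be a commutative ring, let (X,w) be a properly weighted R-oriented d-poset, let 𝓕 be an R-sheaf on X, and let k ∈ {0,…,d−1}. Then for every h ∈ C^k(X,𝓕) there exists g ∈ C^{k−1}(X,𝓕) such that h + d_{k−1} g is mock locally minimal and ‖h + d_{k−1} g‖_w ≤ ‖h‖_w. -/
open scoped Classical

noncomputable section

namespace FK

variable {V : Type*} [Fintype V] [PartialOrder V]

/-- The set of faces of dimension `i`. -/
def faces (dim : V → ℤ) (i : ℤ) : Finset V :=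
  Finset.univ.filter fun x => dim x = i

/-- The set of faces of dimension `i` lying above `z`. -/
def facesAbove (dim : V → ℤ) (i : ℤ) (z : V) : Finset V :=
  Finset.univ.filter fun x => dim x = i ∧ z ≤ x

/-- The set of faces of dimension `i` lying below `y`. -/
def facesBelow (dim : V → ℤ) (i : ℤ) (y : V) : Finset V :=
  Finset.univ.filter fun x => dim x = i ∧ x ≤ y

/-- The set of faces of dimension `j` lying between `x` and `z`. -/
def facesBetween (dim : V → ℤ) (j : ℤ) (x z : V) : Finset V :=
  Finset.univ.filter fun y => dim y = j ∧ x ≤ y ∧ y ≤ z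

/-- Total weight of a finite set of faces. -/
def wsum (w : V → ℝ) (A : Finset V) : ℝ := ∑ x ∈ A, w x

/-- `(V, dim)` is a `d`-poset with least face `bot` (of dimension `-1`). -/
structure IsDPoset (dim : V → ℤ) (d : ℤ) (bot : V) : Prop where
  dim_strictMono : ∀ ⦃x y : V⦄, x < y → dim x < dim y
  dim_covBy : ∀ ⦃x y : V⦄, x ⋖ y → dim y = dim x + 1
  bot_le : ∀ x : V, bot ≤ x
  dim_bot : dim bot = -1
  pure : ∀ x : V, ∃ y : V, x ≤ y ∧ dim y = d

/-- Graded poset axioms. -/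
structure IsGraded (dim : V → ℤ) : Prop where
  dim_strictMono : ∀ ⦃x y : V⦄, x < y → dim x < dim y
  dim_covBy : ∀ ⦃x y : V⦄, x ⋖ y → dim y = dim x + 1

/-- `w` is a proper weight function on the `d`-poset `(V, dim)`. -/
structure IsProperWeight (dim : V → ℤ) (d : ℤ) (w : V → ℝ) : Prop where
  pos : ∀ x : V, 0 < w x
  total : wsum w (faces dim d) = 1
  eq : ∀ x : V, w x = ∑ y ∈ facesAbove dim d x, w y / ((facesBelow dim (dim x) y).card : ℝ)

/-- The weight function induced on the link of `z`. -/
def linkWeight (dim : V → ℤ) (d : ℤ) (w : V → ℝ) (z x : V) : ℝ :=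
  (wsum w (facesAbove dim d z))⁻¹ *
    ∑ y ∈ facesAbove dim d x, w y / ((facesBetween dim (dim x) z y).card : ℝ)

/-- An `R`-orientation on the graded poset `(V, dim)`. -/
structure IsOrientation (R : Type*) [CommRing R] (dim : V → ℤ) (sgn : V → V → R) : Prop where
  isUnit : ∀ ⦃x y : V⦄, x ⋖ y → IsUnit (sgn y x)
  sum_eq_zero : ∀ ⦃x z : V⦄, x ≤ z → dim z = dim x + 2 →
    ∑ y ∈ Finset.univ.filter (fun y => x < y ∧ y < z), sgn z y * sgn y x = 0

/-- The restriction maps of a sheaf compose. -/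
structure IsSheafRes (R : Type*) [CommRing R] (F : V → Type*)
    [∀ x, AddCommGroup (F x)] [∀ x, Module R (F x)]
    (res : ∀ x y : V, x ≤ y → (F x →ₗ[R] F y)) : Prop where
  refl : ∀ x : V, res x x le_rfl = LinearMap.id
  trans : ∀ ⦃x y z : V⦄ (hxy : x ≤ y) (hyz : y ≤ z),
    (res y z hyz).comp (res x y hxy) = res x z (hxy.trans hyz)

/-- `i`-cochains with coefficients in the sheaf `F`. -/
abbrev Cochain (dim : V → ℤ) (F : V → Type*) (i : ℤ) : Type _ :=
  ∀ x : {x : V // dim x = i}, F x.1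

/-- Cochains on the link of `u`, indexed by the ambient dimension `i`
(i.e. link-dimension `i - dim u - 1`). -/
abbrev LCochain (dim : V → ℤ) (F : V → Type*) (u : V) (i : ℤ) : Type _ :=
  ∀ x : {x : V // dim x = i ∧ u ≤ x}, F x.1

section Sheaf

variable {R : Type*} [CommRing R] (dim : V → ℤ) (F : V → Type*)
  [∀ x, AddCommGroup (F x)] [∀ x, Module R (F x)]
  (sgn : V → V → R) (res : ∀ x y : V, x ≤ y → (F x →ₗ[R] F y))
  (w : V → ℝ) (d : ℤ)

/-- The coboundary map, from dimension `i` to dimension `j` (intended: `j = i + 1`). -/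
def coboundary (i j : ℤ) (f : Cochain dim F i) : Cochain dim F j := fun y =>
  ∑ x : {x : V // dim x = i},
    if h : x.1 ≤ y.1 then sgn y.1 x.1 • res x.1 y.1 h (f x) else 0

/-- The coboundary map on the link of `u`. -/
def lcoboundary (u : V) (i j : ℤ) (f : LCochain dim F u i) : LCochain dim F u j := fun y =>
  ∑ x : {x : V // dim x = i ∧ u ≤ x},
    if h : x.1 ≤ y.1 then sgn y.1 x.1 • res x.1 y.1 h (f x) else 0

/-- Weighted Hamming norm of a cochain. -/
def cnorm {i : ℤ} (f : Cochain dim F i) : ℝ :=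
  ∑ x : {x : V // dim x = i}, if f x ≠ 0 then w x.1 else 0

/-- Norm of a cochain on the link of `u`, w.r.t. the weight induced on the link. -/
def lnorm (u : V) {i : ℤ} (f : LCochain dim F u i) : ℝ :=
  ∑ x : {x : V // dim x = i ∧ u ≤ x}, if f x ≠ 0 then linkWeight dim d w u x.1 else 0

/-- `i`-cocycles. -/
def cocycles (i : ℤ) : Set (Cochain dim F i) :=
  {f | coboundary dim F sgn res i (i + 1) f = 0}

/-- `i`-coboundaries. -/
def coboundariesSet (i : ℤ) : Set (Cochain dim F i) :=
  {f | ∃ g : Cochain dim F (i - 1), coboundary dim F sgn res (i - 1) i g = f}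

/-- Weighted Hamming distance from a cochain to a set of cochains. -/
def distTo {i : ℤ} (f : Cochain dim F i) (S : Set (Cochain dim F i)) : ℝ :=
  sInf ((fun g => cnorm dim F w (f - g)) '' S)

/-- Coboundaries on the link of `u`, at ambient dimension `i`. -/
def lcoboundariesSet (u : V) (i : ℤ) : Set (LCochain dim F u i) :=
  {f | ∃ g : LCochain dim F u (i - 1), lcoboundary dim F sgn res u (i - 1) i g = f}

/-- `cbe_{i - dim u - 1}(X_u, w_u, F_u) ≥ ε`, expressed at ambient dimension `i`. -/
def LinkCbeGe (u : V) (i : ℤ) (ε : ℝ) : Prop :=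
  ∀ f : LCochain dim F u i,
    ε * sInf ((fun g => lnorm dim F w d u (f - g)) '' lcoboundariesSet dim F sgn res u i)
      ≤ lnorm dim F w d u (lcoboundary dim F sgn res u i (i + 1) f)

/-- Extension of a link cochain by zero. -/
def extendByZero (u : V) {i : ℤ} (b : LCochain dim F u i) : Cochain dim F i := fun x =>
  if h : u ≤ x.1 then b ⟨x.1, x.2, h⟩ else 0

/-- `f` is mock `q`-locally minimal at `u`. -/
def MockMinAt (q : ℝ) (m : ℤ) (f : Cochain dim F m) (u : V) : Prop :=
  ∀ g : LCochain dim F u (m - 1),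
    cnorm dim F w f ≤
      cnorm dim F w (f + extendByZero dim F u (lcoboundary dim F sgn res u (m - 1) m g)) +
        q * w u

/-- `f` is mock `q`-locally minimal. -/
def MockMin (q : ℝ) (m : ℤ) (f : Cochain dim F m) : Prop :=
  ∀ u : V, 0 ≤ dim u → dim u ≤ m → MockMinAt dim F sgn res w q m f u

end Sheaf

/-- `ugr(X_u, w_u)` is an `(α, β)`-skeleton expander. -/
def LinkUgrSkeletonExpander (dim : V → ℤ) (d : ℤ) (w : V → ℝ) (u : V) (α β : ℝ) : Prop :=
  ∀ A ⊆ facesAbove dim (dim u + 1) u,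
    wsum (linkWeight dim d w u)
        ((facesAbove dim (dim u + 2) u).filter fun e =>
          ∃ x ∈ A, ∃ y ∈ A, x ≠ y ∧ x ≤ e ∧ y ≤ e)
      ≤ α * wsum (linkWeight dim d w u) A + β * wsum (linkWeight dim d w u) A ^ 2

/-- `ugr(X, w)` is an `(α, β)`-skeleton expander. -/
def UgrSkeletonExpander (dim : V → ℤ) (w : V → ℝ) (α β : ℝ) : Prop :=
  ∀ A ⊆ faces dim 0,
    wsum w ((faces dim 1).filter fun e => ∃ x ∈ A, ∃ y ∈ A, x ≠ y ∧ x ≤ e ∧ y ≤ e)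
      ≤ α * wsum w A + β * wsum w A ^ 2

/-- `NI^{1,1,2}(X, w)` is an `(α, β)`-skeleton expander. -/
def NI112SkeletonExpander (dim : V → ℤ) (w : V → ℝ) (bot : V) (α β : ℝ) : Prop :=
  ∀ A ⊆ faces dim 1,
    wsum w ((faces dim 2).filter fun z =>
        ∃ x ∈ A, ∃ y ∈ A, x ≠ y ∧ x ≤ z ∧ y ≤ z ∧ ∀ t : V, t ≤ x → t ≤ y → t = bot)
      ≤ α * wsum w A + β * wsum w A ^ 2

/-- Pairs of an `i`-face and a `k`-face that are incident. -/
def incidentPairs (dim : V → ℤ) (i k : ℤ) : Finset (V × V) :=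
  Finset.univ.filter fun p => dim p.1 = i ∧ dim p.2 = k ∧ p.1 ≤ p.2

/-- `F^max_{i,j,k}(X)`. -/
def Fmax (dim : V → ℤ) (i j k : ℤ) : ℕ :=
  (incidentPairs dim i k).sup fun p => (facesBetween dim j p.1 p.2).card

/-- `F^min_{i,j,k}(X)`. -/
def Fmin (dim : V → ℤ) (i j k : ℤ) : ℕ :=
  if h : (incidentPairs dim i k).Nonempty then
    ((incidentPairs dim i k).image fun p => (facesBetween dim j p.1 p.2).card).min'
      (h.image _)
  else 0

end FK

/-!
Let `h'` have minimal norm among all cochains `h + δ g`; it exists because the norm takes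
only finitely many values, the subset sums of `w`. A local correction `b^u` with
`b = δ_u c` is itself the global coboundary `δ (c^u)`, because extension by zero commutes
with the coboundary; so `h' + b^u` lies in the same coset and cannot have smaller norm.
-/

namespace FK

section Norm

variable {V : Type*} [Fintype V] (dim : V → ℤ) (F : V → Type*) [∀ x, AddCommGroup (F x)]
  (w : V → ℝ)

lemma cnorm_eq_sum_filter {i : ℤ} (f : Cochain dim F i) :
    cnorm dim F w f = ∑ x ∈ Finset.univ.filter (fun x => f x ≠ 0), w x.1 :=
  (Finset.sum_filter _ _).symm

lemma exists_forall_cnorm_le {α : Type*} [Nonempty α] {i : ℤ} (f : α → Cochain dim F i) :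
    ∃ a, ∀ b, cnorm dim F w (f a) ≤ cnorm dim F w (f b) := by
  have hfin : (Set.range fun a => cnorm dim F w (f a)).Finite := by
    refine (Set.finite_range fun s : Finset {x : V // dim x = i} => ∑ x ∈ s, w x.1).subset ?_
    rintro _ ⟨a, rfl⟩
    exact ⟨_, (cnorm_eq_sum_filter dim F w (f a)).symm⟩
  obtain ⟨_, ⟨a, rfl⟩, hmin⟩ :=
    Set.exists_min_image _ id hfin (Set.range_nonempty fun a => cnorm dim F w (f a))
  exact ⟨a, fun b => hmin _ ⟨b, rfl⟩⟩

end Norm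

section Coboundary

variable {V : Type*} [Fintype V] [PartialOrder V]
variable {R : Type*} [CommRing R] (dim : V → ℤ) (F : V → Type*)
  [∀ x, AddCommGroup (F x)] [∀ x, Module R (F x)]
  (sgn : V → V → R) (res : ∀ x y : V, x ≤ y → (F x →ₗ[R] F y))

lemma coboundary_zero (i j : ℤ) :
    coboundary dim F sgn res i j (0 : Cochain dim F i) = 0 := by
  funext y
  refine Finset.sum_eq_zero fun x _ => ?_
  split_ifs <;> simp

lemma coboundary_add (i j : ℤ) (a b : Cochain dim F i) :
    coboundary dim F sgn res i j (a + b) =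
      coboundary dim F sgn res i j a + coboundary dim F sgn res i j b := by
  funext y
  simp only [coboundary, Pi.add_apply, ← Finset.sum_add_distrib]
  refine Finset.sum_congr rfl fun x _ => ?_
  split_ifs <;> simp

lemma coboundary_extendByZero (u : V) (i j : ℤ) (g : LCochain dim F u i) :
    coboundary dim F sgn res i j (extendByZero dim F u g) =
      extendByZero dim F u (lcoboundary dim F sgn res u i j g) := by
  funext y
  simp only [coboundary, extendByZero, lcoboundary]
  by_cases hu : u ≤ y.1
  · rw [dif_pos hu]
    -- only faces above `u` contribute, and those are exactly the faces of the link
    refine (Fintype.sum_of_injective (fun x => ⟨x.1, x.2.1⟩) ?_ _ _ ?_ ?_).symm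
    · exact fun x x' hxx' => Subtype.ext (congrArg (fun z : {x : V // dim x = i} => z.1) hxx')
    · intro x hx
      have hux : ¬u ≤ x.1 := fun hux => hx ⟨⟨x.1, x.2, hux⟩, rfl⟩
      split_ifs <;> simp
    · intro x
      simp only [dif_pos x.2.2]
  · rw [dif_neg hu]
    refine Finset.sum_eq_zero fun x _ => ?_
    split_ifs with hxy hux
    · exact absurd (hux.trans hxy) hu
    all_goals simp

variable (w : V → ℝ)

lemma mockMin_zero_of_forall_cnorm_le {m : ℤ} (f : Cochain dim F m)
    (hf : ∀ g : Cochain dim F (m - 1),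
      cnorm dim F w f ≤ cnorm dim F w (f + coboundary dim F sgn res (m - 1) m g)) :
    MockMin dim F sgn res w 0 m f := by
  intro u _ _ g
  rw [zero_mul, add_zero, ← coboundary_extendByZero]
  exact hf _

end Coboundary

end FK

theorem statement4_general
    (V : Type) [Fintype V] [PartialOrder V] (dim : V → ℤ)
    (w : V → ℝ)
    (R : Type) [CommRing R] (sgn : V → V → R)
    (F : V → Type) [∀ x, AddCommGroup (F x)] [∀ x, Module R (F x)]
    (res : ∀ x y : V, x ≤ y → (F x →ₗ[R] F y))
    (k : ℕ) :
    ∀ h : FK.Cochain dim F (k : ℤ),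
      ∃ g : FK.Cochain dim F ((k : ℤ) - 1),
        FK.MockMin dim F sgn res w 0 (k : ℤ)
            (h + FK.coboundary dim F sgn res ((k : ℤ) - 1) (k : ℤ) g) ∧
          FK.cnorm dim F w (h + FK.coboundary dim F sgn res ((k : ℤ) - 1) (k : ℤ) g) ≤
            FK.cnorm dim F w h := by
  intro h
  obtain ⟨g₀, hg₀⟩ := FK.exists_forall_cnorm_le dim F w
    fun g => h + FK.coboundary dim F sgn res ((k : ℤ) - 1) (k : ℤ) g
  refine ⟨g₀, FK.mockMin_zero_of_forall_cnorm_le dim F sgn res w _ fun g => ?_, ?_⟩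
  · rw [add_assoc, ← FK.coboundary_add]
    exact hg₀ _
  · simpa only [FK.coboundary_zero, add_zero] using hg₀ 0

/-- every cochain can be corrected into a mock locally minimal one
without increasing its norm. -/
theorem statement4
    (V : Type) [Fintype V] [PartialOrder V] (dim : V → ℤ) (d : ℤ) (bot : V)
    (hX : FK.IsDPoset dim d bot)
    (w : V → ℝ) (hw : FK.IsProperWeight dim d w)
    (R : Type) [CommRing R] (sgn : V → V → R) (hsgn : FK.IsOrientation R dim sgn)
    (F : V → Type) [∀ x, AddCommGroup (F x)] [∀ x, Module R (F x)]
    (res : ∀ x y : V, x ≤ y → (F x →ₗ[R] F y)) (hres : FK.IsSheafRes R F res)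
    (k : ℕ) (hk : (k : ℤ) ≤ d - 1) :
    ∀ h : FK.Cochain dim F (k : ℤ),
      ∃ g : FK.Cochain dim F ((k : ℤ) - 1),
        FK.MockMin dim F sgn res w 0 (k : ℤ)
            (h + FK.coboundary dim F sgn res ((k : ℤ) - 1) (k : ℤ) g) ∧
          FK.cnorm dim F w (h + FK.coboundary dim F sgn res ((k : ℤ) - 1) (k : ℤ) g) ≤
            FK.cnorm dim F w h :=
  statement4_general V dim w R sgn F res k
end
end

section
/- Let (X,w) be a properly weighted d-poset, let −1 ≤ i ≤ j ≤ d be integers, and let z ∈ X(i). Then (F^min_{i,j,d}·F^min_{i,d}/F^max_{j,d})·w(z) ≤ w(X(j)_z) ≤ (F^max_{i,j,d}·F^max_{i,d}/F^min_{j,d})·w(z), where X(j)_z = {x ∈ X(j) : x ≥ z}. -/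
open scoped Classical

noncomputable section

/-!
By properness a `j`-face `x` receives the share `w y / #y(j)` of every `d`-face `y ≥ x`. Double
counting the pairs `z ≤ x ≤ y` gives `w(X(j)_z) = Σ_y #[z, y]_j · w y / #y(j)`, where `y` runs over
the `d`-faces above `z` and `#[z, y]_j` counts the `j`-faces between them, while
`w z = Σ_y w y / #y(i)`. Comparing the two sums term by term, with `#[z, y]_j`, `#y(i)` and `#y(j)`
bounded by the corresponding `F^min` and `F^max`, gives both inequalities.
-/

namespace FK

open Finset

variable {V : Type*} [Fintype V] [PartialOrder V] {dim : V → ℤ}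

@[simp]
theorem mem_facesAbove {i : ℤ} {x z : V} :
    x ∈ facesAbove dim i z ↔ dim x = i ∧ z ≤ x := by
  simp [facesAbove]

@[simp]
theorem mem_facesBetween {j : ℤ} {t x y : V} :
    t ∈ facesBetween dim j x y ↔ dim t = j ∧ x ≤ t ∧ t ≤ y := by
  simp [facesBetween]

theorem facesBetween_nonempty (hcov : ∀ ⦃x y : V⦄, x ⋖ y → dim y = dim x + 1) {j : ℤ}
    {x y : V} (hxy : x ≤ y) (hxj : dim x ≤ j) (hjy : j ≤ dim y) :
    (facesBetween dim j x y).Nonempty := by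
  induction x using WellFoundedGT.induction with
  | _ x ih =>
  obtain hxj | rfl := hxj.lt_or_eq
  · obtain ⟨m, hxm, hmy⟩ := exists_covBy_le_of_lt (hxy.lt_of_ne (by rintro rfl; omega))
    obtain ⟨t, ht⟩ := ih m hxm.lt hmy (by rw [hcov hxm]; omega)
    rw [mem_facesBetween] at ht
    exact ⟨t, mem_facesBetween.2 ⟨ht.1, hxm.le.trans ht.2.1, ht.2.2⟩⟩
  · exact ⟨x, mem_facesBetween.2 ⟨rfl, le_rfl, hxy⟩⟩

@[simp]
theorem mem_incidentPairs {i k : ℤ} {p : V × V} :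
    p ∈ incidentPairs dim i k ↔ dim p.1 = i ∧ dim p.2 = k ∧ p.1 ≤ p.2 := by
  simp [incidentPairs]

theorem card_facesBetween_le_Fmax {i j k : ℤ} {x y : V} (hx : dim x = i) (hy : dim y = k)
    (hxy : x ≤ y) : (facesBetween dim j x y).card ≤ Fmax dim i j k :=
  le_sup (f := fun p : V × V => (facesBetween dim j p.1 p.2).card)
    (mem_incidentPairs.2 ⟨hx, hy, hxy⟩ : (x, y) ∈ incidentPairs dim i k)

theorem Fmin_le_card_facesBetween {i j k : ℤ} {x y : V} (hx : dim x = i) (hy : dim y = k)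
    (hxy : x ≤ y) : Fmin dim i j k ≤ (facesBetween dim j x y).card := by
  have hmem : (x, y) ∈ incidentPairs dim i k := mem_incidentPairs.2 ⟨hx, hy, hxy⟩
  rw [Fmin, dif_pos ⟨_, hmem⟩]
  exact min'_le _ _ (mem_image_of_mem _ hmem)

theorem Fmin_pos (hcov : ∀ ⦃x y : V⦄, x ⋖ y → dim y = dim x + 1) {i j k : ℤ}
    (hij : i ≤ j) (hjk : j ≤ k) (hne : (incidentPairs dim i k).Nonempty) :
    0 < Fmin dim i j k := by
  rw [Fmin, dif_pos hne, lt_min'_iff]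
  simp only [mem_image, forall_exists_index, and_imp]
  rintro _ p hp rfl
  obtain ⟨hpi, hpk, hle⟩ := mem_incidentPairs.1 hp
  exact (facesBetween_nonempty hcov hle (by omega) (by omega)).card_pos

theorem facesBelow_eq_facesBetween {bot : V} (hbot : ∀ x, bot ≤ x) (k : ℤ) (y : V) :
    facesBelow dim k y = facesBetween dim k bot y := by
  ext t
  simp [facesBelow, hbot t]

theorem wsum_facesAbove_eq_sum {d : ℤ} {w : V → ℝ} (hw : IsProperWeight dim d w) (j : ℤ)
    (z : V) :
    wsum w (facesAbove dim j z) = ∑ y ∈ facesAbove dim d z,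
      (facesBetween dim j z y).card * (w y / (facesBelow dim j y).card) := by
  have hshare : ∀ x ∈ facesAbove dim j z, w x = ∑ y ∈ facesAbove dim d z,
      if x ≤ y then w y / (facesBelow dim j y).card else 0 := by
    intro x hx
    obtain ⟨hxj, hzx⟩ := mem_facesAbove.1 hx
    rw [hw.eq x, hxj, ← sum_filter]
    congr 1
    ext y
    simp only [mem_filter, mem_facesAbove]
    exact ⟨fun h => ⟨⟨h.1, hzx.trans h.2⟩, h.2⟩, fun h => ⟨h.1.1, h.2⟩⟩
  rw [wsum, sum_congr rfl hshare, sum_comm]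
  refine sum_congr rfl fun y _ => ?_
  rw [← sum_filter, sum_const, nsmul_eq_mul]
  congr 3
  ext x
  simp only [mem_filter, mem_facesAbove, mem_facesBetween, and_assoc]

theorem IsDPoset.card_facesBelow_pos {d : ℤ} {bot : V} (hX : IsDPoset dim d bot) {k : ℤ}
    {y : V} (hk : -1 ≤ k) (hky : k ≤ dim y) : 0 < (facesBelow dim k y).card := by
  rw [facesBelow_eq_facesBetween hX.bot_le]
  exact (facesBetween_nonempty hX.dim_covBy (hX.bot_le y) (hX.dim_bot ▸ hk) hky).card_pos

section IsDPoset

variable {d : ℤ} {bot : V} (hX : IsDPoset dim d bot) {i j : ℤ} (hi : -1 ≤ i) (hij : i ≤ j)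
  (hjd : j ≤ d) {z y : V} (hz : dim z = i) (hyd : dim y = d) (hzy : z ≤ y)
  {a : ℝ} (ha : 0 ≤ a)
include hX hi hij hjd hz hyd hzy ha

theorem Fmin_mul_Fmin_div_Fmax_mul_le :
    (Fmin dim i j d * Fmin dim (-1) i d / Fmax dim (-1) j d : ℝ) *
        (a / (facesBelow dim i y).card) ≤
      (facesBetween dim j z y).card * (a / (facesBelow dim j y).card) := by
  have hb := hX.card_facesBelow_pos hi (by omega : i ≤ dim y)
  have hc := hX.card_facesBelow_pos (by omega) (by omega : j ≤ dim y)
  have hbot := hX.dim_bot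
  simp only [facesBelow_eq_facesBetween hX.bot_le] at hb hc ⊢
  have hna := Fmin_le_card_facesBetween (j := j) hz hyd hzy
  have hnb := Fmin_le_card_facesBetween (j := i) hbot hyd (hX.bot_le y)
  have hnc := card_facesBetween_le_Fmax (j := j) hbot hyd (hX.bot_le y)
  have hnc0 := hc.trans_le hnc
  rw [div_mul_div_comm, mul_div_assoc', div_le_div_iff₀ (by positivity) (by positivity)]
  calc _ = (Fmin dim i j d * Fmin dim (-1) i d * (facesBetween dim j bot y).card : ℝ) * a := by
        ring
    _ ≤ ((facesBetween dim j z y).card * (facesBetween dim i bot y).card *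
        Fmax dim (-1) j d : ℝ) * a := by gcongr
    _ = _ := by ring

theorem le_Fmax_mul_Fmax_div_Fmin_mul :
    (facesBetween dim j z y).card * (a / (facesBelow dim j y).card) ≤
      (Fmax dim i j d * Fmax dim (-1) i d / Fmin dim (-1) j d : ℝ) *
          (a / (facesBelow dim i y).card) := by
  have hb := hX.card_facesBelow_pos hi (by omega : i ≤ dim y)
  have hc := hX.card_facesBelow_pos (by omega) (by omega : j ≤ dim y)
  have hbot := hX.dim_bot
  simp only [facesBelow_eq_facesBetween hX.bot_le] at hb hc ⊢
  have hNA := card_facesBetween_le_Fmax (j := j) hz hyd hzy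
  have hNB := card_facesBetween_le_Fmax (j := i) hbot hyd (hX.bot_le y)
  have hNC := Fmin_le_card_facesBetween (j := j) hbot hyd (hX.bot_le y)
  have hNC0 : 0 < Fmin dim (-1) j d := Fmin_pos hX.dim_covBy (by omega) hjd
    ⟨(bot, y), mem_incidentPairs.2 ⟨hbot, hyd, hX.bot_le y⟩⟩
  rw [div_mul_div_comm, mul_div_assoc', div_le_div_iff₀ (by positivity) (by positivity)]
  calc _ = ((facesBetween dim j z y).card * (facesBetween dim i bot y).card *
        Fmin dim (-1) j d : ℝ) * a := by ring
    _ ≤ (Fmax dim i j d * Fmax dim (-1) i d * (facesBetween dim j bot y).card : ℝ) * a := by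
        gcongr
    _ = _ := by ring

end IsDPoset

end FK

open FK Finset in
/-- bounds on the total weight of the `j`-faces above a fixed `i`-face. -/
theorem statement17
    (V : Type) [Fintype V] [PartialOrder V] (dim : V → ℤ) (d : ℤ) (bot : V)
    (hX : FK.IsDPoset dim d bot)
    (w : V → ℝ) (hw : FK.IsProperWeight dim d w)
    (i j : ℤ) (hi : -1 ≤ i) (hij : i ≤ j) (hjd : j ≤ d)
    (z : V) (hz : dim z = i) :
    (FK.Fmin dim i j d : ℝ) * (FK.Fmin dim (-1) i d : ℝ) / (FK.Fmax dim (-1) j d : ℝ) * w z ≤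
        FK.wsum w (FK.facesAbove dim j z) ∧
      FK.wsum w (FK.facesAbove dim j z) ≤
        (FK.Fmax dim i j d : ℝ) * (FK.Fmax dim (-1) i d : ℝ) / (FK.Fmin dim (-1) j d : ℝ) * w z := by
  have hwz : w z = ∑ y ∈ facesAbove dim d z, w y / (facesBelow dim i y).card := hz ▸ hw.eq z
  rw [wsum_facesAbove_eq_sum hw, hwz, mul_sum, mul_sum]
  constructor <;> refine sum_le_sum fun y hy => ?_
  all_goals obtain ⟨hyd, hzy⟩ := mem_facesAbove.1 hy
  · exact Fmin_mul_Fmin_div_Fmax_mul_le hX hi hij hjd hz hyd hzy (hw.pos y).le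
  · exact le_Fmax_mul_Fmax_div_Fmin_mul hX hi hij hjd hz hyd hzy (hw.pos y).le
end
end
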